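/- arXiv:2005.06531 — 2 statements merged into one kernel-verified Lean document; each statement's English description precedes it below -/
import Mathlib

section
/- Let K be a field of characteristic zero, and let I ⊂ K[X₁,X₂] be the maximal ideal of a K-rational point (a,b), i.e., I = (X₁ − a, X₂ − b). Then for every n ≥ 1, the n-th differential power of I, namely the set of polynomials P such that all divided derivatives ∂ⱼP with j₁ + j₂ < n vanish at (a,b), equals I^n. -/
open MvPolynomial

noncomputable def iterDeriv {R : Type*} [CommRing R] (j : Fin 2 → ℕ) :
    MvPolynomial (Fin 2) R →ₗ[R] MvPolynomial (Fin 2) R :=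
  ((pderiv (R := R) (0 : Fin 2)).toLinearMap ^ (j 0)) *
    ((pderiv (R := R) (1 : Fin 2)).toLinearMap ^ (j 1))

/-- The divided derivative `∂ⱼP = (1/(j₁! j₂!)) ∂^{j₁+j₂}P/∂X₁^{j₁}∂X₂^{j₂}`. -/
noncomputable def dividedDeriv {R : Type*} [Field R] (j : Fin 2 → ℕ) :
    MvPolynomial (Fin 2) R →ₗ[R] MvPolynomial (Fin 2) R :=
  (((j 0).factorial * (j 1).factorial : R)⁻¹) • iterDeriv j

open Finsupp Pointwise

lemma coeff_pderiv {R : Type*} [CommSemiring R] (i : Fin 2) (m : Fin 2 →₀ ℕ)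
    (Q : MvPolynomial (Fin 2) R) :
    coeff m (pderiv i Q) = (m i + 1) * coeff (m + Finsupp.single i 1) Q := by
  induction Q using MvPolynomial.induction_on' with
  | monomial s c =>
    rw [pderiv_monomial, coeff_monomial, coeff_monomial]
    rcases Nat.eq_zero_or_pos (s i) with h | h
    · have hne : s ≠ m + Finsupp.single i 1 := by
        intro he; rw [he] at h; simp at h
      simp [hne, h]
    · have key : s - Finsupp.single i 1 = m ↔ s = m + Finsupp.single i 1 := by
        constructor
        · intro he
          ext k
          by_cases hk : k = i
          · subst hk
            have := congrArg (fun f : Fin 2 →₀ ℕ => f k) he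
            simp [Finsupp.single_apply] at this ⊢
            omega
          · have := congrArg (fun f : Fin 2 →₀ ℕ => f k) he
            simp [Finsupp.single_apply, hk, Ne.symm hk] at this ⊢
            omega
        · intro he; subst he; ext k; by_cases hk : k = i <;>
            simp [Finsupp.single_apply, hk]
      by_cases hm : s = m + Finsupp.single i 1
      · have : s - Finsupp.single i 1 = m := key.mpr hm
        have hsi : s i = m i + 1 := by subst hm; simp
        simp [this, hm, hsi, mul_comm]
      · have : ¬ (s - Finsupp.single i 1 = m) := fun h => hm (key.mp h)
        simp [this, hm]
  | add p q hp hq => simp [hp, hq, mul_add]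

lemma coeff_pderiv_pow {R : Type*} [CommSemiring R] (i : Fin 2) (k : ℕ) (m : Fin 2 →₀ ℕ)
    (hm : m i = 0) (Q : MvPolynomial (Fin 2) R) :
    coeff m (((pderiv (R := R) i).toLinearMap ^ k) Q) =
      (k.factorial : R) * coeff (m + Finsupp.single i k) Q := by
  induction k generalizing Q with
  | zero => simp
  | succ k ih =>
    rw [pow_succ, Module.End.mul_apply, ih,
      show (((pderiv (R := R) i).toLinearMap) Q) = pderiv i Q from rfl, _root_.coeff_pderiv]
    have h1 : (m + Finsupp.single i k) i = k := by simp [hm]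
    have h2 : m + Finsupp.single i k + Finsupp.single i 1 = m + Finsupp.single i (k + 1) := by
      ext j; by_cases hj : j = i <;> simp [Finsupp.single_apply, hj] <;> omega
    rw [h1, h2, Nat.factorial_succ]
    push_cast
    ring

/-- The multi-index `(j 0, j 1)` as a `Finsupp`. -/
noncomputable def μ (j : Fin 2 → ℕ) : Fin 2 →₀ ℕ :=
  Finsupp.single 0 (j 0) + Finsupp.single 1 (j 1)

lemma μ_apply0 (j : Fin 2 → ℕ) : μ j 0 = j 0 := by simp [μ]
lemma μ_apply1 (j : Fin 2 → ℕ) : μ j 1 = j 1 := by simp [μ]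

lemma μ_eq_self (m : Fin 2 →₀ ℕ) : μ (fun i => m i) = m := by
  ext k
  fin_cases k <;> simp [μ, Finsupp.single_apply, Fin.ext_iff]


lemma eval_zero_iterDeriv {R : Type*} [CommRing R] (j : Fin 2 → ℕ)
    (P : MvPolynomial (Fin 2) R) :
    eval (0 : Fin 2 → R) (iterDeriv j P) =
      ((j 0).factorial * (j 1).factorial : R) * coeff (μ j) P := by
  have h0 : eval (0 : Fin 2 → R) (iterDeriv j P) = coeff 0 (iterDeriv j P) := by
    rw [eval_zero, constantCoeff_eq]
  rw [h0, iterDeriv, Module.End.mul_apply,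
    coeff_pderiv_pow (0 : Fin 2) (j 0) 0 rfl,
    coeff_pderiv_pow (1 : Fin 2) (j 1) _ (by simp [Finsupp.single_apply])]
  rw [zero_add]
  rw [show (Finsupp.single (0 : Fin 2) (j 0) + Finsupp.single 1 (j 1)) = μ j from rfl]
  ring

lemma eval_zero_dividedDeriv {K : Type*} [Field K] [CharZero K] (j : Fin 2 → ℕ)
    (P : MvPolynomial (Fin 2) K) :
    eval (0 : Fin 2 → K) (dividedDeriv j P) = coeff (μ j) P := by
  have hf : ((j 0).factorial * (j 1).factorial : K) ≠ 0 := by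
    exact mul_ne_zero (Nat.cast_ne_zero.2 (j 0).factorial_ne_zero)
      (Nat.cast_ne_zero.2 (j 1).factorial_ne_zero)
  rw [dividedDeriv, LinearMap.smul_apply, smul_eq_C_mul, map_mul, eval_C,
    eval_zero_iterDeriv, ← mul_assoc, inv_mul_cancel₀ hf, one_mul]

lemma span_XX_pow (K : Type*) [Field K] (n : ℕ) :
    (Ideal.span {X 0, X 1} : Ideal (MvPolynomial (Fin 2) K)) ^ n =
      Ideal.span ((fun s => monomial s (1 : K)) '' {s : Fin 2 →₀ ℕ | s 0 + s 1 = n}) := by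
  induction n with
  | zero =>
    rw [pow_zero]
    have : {s : Fin 2 →₀ ℕ | s 0 + s 1 = 0} = {0} := by
      ext s
      simp only [Set.mem_setOf_eq, Set.mem_singleton_iff, Nat.add_eq_zero]
      constructor
      · rintro ⟨h0, h1⟩
        ext k; fin_cases k <;> assumption
      · rintro rfl; simp
    rw [this, Set.image_singleton]
    simp [Ideal.one_eq_top, Ideal.span_singleton_one]
  | succ n ih =>
    rw [pow_succ, ih, Ideal.span_mul_span']
    apply le_antisymm
    · rw [Ideal.span_le]
      rintro _ ⟨_, ⟨s, hs, rfl⟩, g, hg, rfl⟩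
      simp only [Set.mem_insert_iff, Set.mem_singleton_iff] at hg
      simp only [Set.mem_setOf_eq] at hs
      apply Ideal.subset_span
      rcases hg with rfl | rfl
      · refine ⟨s + Finsupp.single 0 1, ?_, ?_⟩
        · simp only [Set.mem_setOf_eq, Finsupp.add_apply, Finsupp.single_apply]
          simp; omega
        · show monomial (s + Finsupp.single 0 1) (1:K) = monomial s 1 * monomial (Finsupp.single 0 1) 1
          rw [monomial_mul, one_mul]
      · refine ⟨s + Finsupp.single 1 1, ?_, ?_⟩
        · simp only [Set.mem_setOf_eq, Finsupp.add_apply, Finsupp.single_apply]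
          simp; omega
        · show monomial (s + Finsupp.single 1 1) (1:K) = monomial s 1 * monomial (Finsupp.single 1 1) 1
          rw [monomial_mul, one_mul]
    · rw [Ideal.span_le]
      rintro _ ⟨u, hu, rfl⟩
      simp only [Set.mem_setOf_eq] at hu
      have key : ∀ i : Fin 2, 0 < u i →
          (fun s => monomial s (1 : K)) u ∈
            (((fun s => monomial s (1 : K)) '' {s : Fin 2 →₀ ℕ | s 0 + s 1 = n}) *
              ({X 0, X 1} : Set (MvPolynomial (Fin 2) K))) := by
        intro i hi
        set v : Fin 2 →₀ ℕ := u - Finsupp.single i 1 with hv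
        have huv : u = v + Finsupp.single i 1 := by
          ext k
          by_cases hk : k = i
          · subst hk
            simp [hv, Finsupp.single_apply]
            omega
          · simp [hv, Finsupp.single_apply, hk, Ne.symm hk]
        have hvn : v 0 + v 1 = n := by
          have h0 := congrArg (fun f : Fin 2 →₀ ℕ => f 0) huv
          have h1 := congrArg (fun f : Fin 2 →₀ ℕ => f 1) huv
          simp only [Finsupp.add_apply, Finsupp.single_apply] at h0 h1
          fin_cases i <;> simp at h0 h1 hi <;> omega
        have hmono : monomial u (1 : K) = monomial v 1 * X i := by
          rw [X, monomial_mul, one_mul, ← huv]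
        simp only
        rw [hmono]
        refine Set.mul_mem_mul ⟨v, hvn, rfl⟩ ?_
        fin_cases i
        · exact Or.inl rfl
        · exact Or.inr rfl
      have hpos : 0 < u 0 ∨ 0 < u 1 := by omega
      rcases hpos with h | h
      · exact Ideal.subset_span (key 0 h)
      · exact Ideal.subset_span (key 1 h)

lemma origin_lemma (K : Type*) [Field K] [CharZero K] (n : ℕ) (P : MvPolynomial (Fin 2) K) :
    (∀ j : Fin 2 → ℕ, j 0 + j 1 < n → eval (0 : Fin 2 → K) (dividedDeriv j P) = 0) ↔
      P ∈ (Ideal.span {X 0, X 1} : Ideal (MvPolynomial (Fin 2) K)) ^ n := by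
  rw [span_XX_pow, mem_ideal_span_monomial_image]
  constructor
  · intro h m hm
    have hdeg : n ≤ m 0 + m 1 := by
      by_contra hc
      push_neg at hc
      have := h (fun i => m i) hc
      rw [eval_zero_dividedDeriv, μ_eq_self] at this
      exact (MvPolynomial.mem_support_iff.mp hm) this
    refine ⟨Finsupp.single 0 (min n (m 0)) + Finsupp.single 1 (n - min n (m 0)), ?_, ?_⟩
    · simp only [Set.mem_setOf_eq, Finsupp.add_apply, Finsupp.single_apply]
      simp
    · rw [Finsupp.le_def]
      intro i
      fin_cases i <;> simp [Finsupp.single_apply] <;> omega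
  · intro h j hj
    rw [eval_zero_dividedDeriv]
    by_contra hc
    obtain ⟨s, hs, hsle⟩ := h (μ j) (MvPolynomial.mem_support_iff.mpr hc)
    simp only [Set.mem_setOf_eq] at hs
    rw [Finsupp.le_def] at hsle
    have h0 := hsle 0
    have h1 := hsle 1
    rw [μ_apply0] at h0
    rw [μ_apply1] at h1
    omega

section Shift
variable {K : Type*} [Field K] (v : Fin 2 → K)

/-- Translation `X i ↦ X i + v i`. -/
noncomputable def shiftHom : MvPolynomial (Fin 2) K →ₐ[K] MvPolynomial (Fin 2) K :=
  aeval (fun i => X i + C (v i))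

lemma shiftHom_pderiv (i : Fin 2) (P : MvPolynomial (Fin 2) K) :
    shiftHom v (pderiv i P) = pderiv i (shiftHom v P) := by
  induction P using MvPolynomial.induction_on with
  | C a => simp [shiftHom]
  | add p q hp hq => simp [map_add, hp, hq]
  | mul_X p k hp =>
    rw [pderiv_mul, map_add, map_mul, map_mul, map_mul, pderiv_mul, hp]
    have hx : shiftHom v (X k) = X k + C (v k) := by simp [shiftHom]
    have hdx : shiftHom v (pderiv i (X k)) = pderiv i (shiftHom v (X k)) := by
      rw [hx, pderiv_X]
      by_cases hik : i = k
      · subst hik; simp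
      · simp [Pi.single_apply, hik, Ne.symm hik]
    rw [hdx]
end Shift

lemma shift_unshift {K : Type*} [Field K] (v : Fin 2 → K) (P : MvPolynomial (Fin 2) K) :
    aeval (fun i => X i - C (v i)) (shiftHom v P) = P := by
  induction P using MvPolynomial.induction_on with
  | C a => simp [shiftHom]
  | add p q hp hq => rw [map_add, map_add, hp, hq]
  | mul_X p k hp =>
    rw [map_mul, map_mul, hp]
    congr 1
    simp [shiftHom]

lemma eval_zero_shiftHom {K : Type*} [Field K] (v : Fin 2 → K) (P : MvPolynomial (Fin 2) K) :
    eval (0 : Fin 2 → K) (shiftHom v P) = eval v P := by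
  induction P using MvPolynomial.induction_on with
  | C a => simp [shiftHom]
  | add p q hp hq => rw [map_add, map_add, hp, hq, map_add]
  | mul_X p k hp =>
    rw [map_mul, map_mul, hp, map_mul]
    congr 1
    simp [shiftHom]

lemma shiftHom_iterDeriv {K : Type*} [Field K] (v : Fin 2 → K) (j : Fin 2 → ℕ)
    (P : MvPolynomial (Fin 2) K) :
    shiftHom v (iterDeriv j P) = iterDeriv j (shiftHom v P) := by
  have key : ∀ (i : Fin 2) (k : ℕ) (Q : MvPolynomial (Fin 2) K),
      shiftHom v (((pderiv (R := K) i).toLinearMap ^ k) Q) =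
        ((pderiv (R := K) i).toLinearMap ^ k) (shiftHom v Q) := by
    intro i k
    induction k with
    | zero => simp
    | succ k ih =>
      intro Q
      rw [pow_succ, Module.End.mul_apply, Module.End.mul_apply, ih,
        show (((pderiv (R := K) i).toLinearMap) Q) = pderiv i Q from rfl,
        show (((pderiv (R := K) i).toLinearMap) (shiftHom v Q)) = pderiv i (shiftHom v Q) from rfl,
        shiftHom_pderiv]
  rw [iterDeriv, Module.End.mul_apply, Module.End.mul_apply, key, key]

lemma shiftHom_dividedDeriv {K : Type*} [Field K] (v : Fin 2 → K) (j : Fin 2 → ℕ)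
    (P : MvPolynomial (Fin 2) K) :
    shiftHom v (dividedDeriv j P) = dividedDeriv j (shiftHom v P) := by
  rw [dividedDeriv, LinearMap.smul_apply, LinearMap.smul_apply, map_smul, shiftHom_iterDeriv]

/-- Let `K` be a field of characteristic zero and let
`I = (X₁ − a, X₂ − b) ⊂ K[X₁,X₂]` be the maximal ideal of a `K`-rational point
`(a,b)`. Then for every `n ≥ 1`, the `n`-th differential power of `I` — the set
of polynomials `P` all of whose divided derivatives `∂ⱼP` with `j₁ + j₂ < n`
vanish at `(a,b)` — equals `I^n`. -/
theorem differential_power_eq_power (K : Type*) [Field K] [CharZero K]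
    (a b : K) (n : ℕ) (hn : 1 ≤ n) :
    {P : MvPolynomial (Fin 2) K | ∀ j : Fin 2 → ℕ, j 0 + j 1 < n →
        eval ![a, b] (dividedDeriv j P) = 0} =
      ((Ideal.span {X 0 - C a, X 1 - C b} ^ n : Ideal (MvPolynomial (Fin 2) K)) :
        Set (MvPolynomial (Fin 2) K)) := by
  set v : Fin 2 → K := ![a, b] with hv
  have hv0 : v 0 = a := rfl
  have hv1 : v 1 = b := rfl
  have hmapI : Ideal.map (shiftHom v) (Ideal.span {X 0 - C a, X 1 - C b}) =
      (Ideal.span {X 0, X 1} : Ideal (MvPolynomial (Fin 2) K)) := by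
    rw [Ideal.map_span, Set.image_pair]
    congr 2
    · simp [shiftHom, hv0]
    · simp [shiftHom, hv1]
  have hmapJ : Ideal.map (aeval (fun i => X i - C (v i)) :
        MvPolynomial (Fin 2) K →ₐ[K] MvPolynomial (Fin 2) K)
      (Ideal.span {X 0, X 1}) = Ideal.span {X 0 - C a, X 1 - C b} := by
    rw [Ideal.map_span, Set.image_pair]
    congr 2 <;> simp [hv0, hv1]
  have hIJ : ∀ P : MvPolynomial (Fin 2) K,
      P ∈ Ideal.span {X 0 - C a, X 1 - C b} ^ n ↔
      shiftHom v P ∈ (Ideal.span {X 0, X 1} : Ideal (MvPolynomial (Fin 2) K)) ^ n := by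
    intro P
    constructor
    · intro hP
      have := Ideal.mem_map_of_mem (shiftHom v) hP
      rwa [Ideal.map_pow, hmapI] at this
    · intro hP
      have := Ideal.mem_map_of_mem
        (aeval (fun i => X i - C (v i)) :
          MvPolynomial (Fin 2) K →ₐ[K] MvPolynomial (Fin 2) K) hP
      rwa [Ideal.map_pow, hmapJ, shift_unshift] at this
  ext P
  simp only [Set.mem_setOf_eq, SetLike.mem_coe]
  rw [hIJ P, ← origin_lemma]
  constructor <;> intro h j hj <;>
    [skip; skip] <;>
    have hkey : eval v (dividedDeriv j P) = eval (0 : Fin 2 → K) (dividedDeriv j (shiftHom v P)) := by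
      rw [← shiftHom_dividedDeriv, eval_zero_shiftHom]
  · rw [← hkey]; exact h j hj
  · rw [hkey]; exact h j hj
end

section
/- Let D be a pseudoeffective ℝ-divisor on a smooth projective surface X with Zariski decomposition D = P + N (P nef, N negative part). If D = P' + N' is any decomposition with P' nef and N' effective, then N ≤ N' (coefficientwise as divisors). -/
open Finsupp

lemma expand_single {ι : Type*} (a : ι →₀ ℝ) :
    ∑ i ∈ a.support, a i • Finsupp.single i (1 : ℝ) = a := by
  conv_rhs => rw [← Finsupp.sum_single a]
  rw [Finsupp.sum]
  refine Finset.sum_congr rfl fun i _ => ?_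
  rw [Finsupp.smul_single, smul_eq_mul, mul_one]

lemma inter_expand {ι : Type*}
    (inter : (ι →₀ ℝ) →ₗ[ℝ] (ι →₀ ℝ) →ₗ[ℝ] ℝ) (a b : ι →₀ ℝ) :
    inter a b = ∑ i ∈ a.support, ∑ j ∈ b.support,
      a i * b j * inter (Finsupp.single i 1) (Finsupp.single j 1) := by
  have key : ∀ u : ι →₀ ℝ, inter u b
      = ∑ j ∈ b.support, b j * inter u (Finsupp.single j 1) := by
    intro u
    conv_lhs => rw [← expand_single b]
    rw [map_sum]
    exact Finset.sum_congr rfl fun j _ => by rw [map_smul, smul_eq_mul]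
  conv_lhs => rw [← expand_single a]
  rw [map_sum, LinearMap.sum_apply]
  refine Finset.sum_congr rfl fun i _ => ?_
  rw [map_smul, LinearMap.smul_apply, smul_eq_mul, key, Finset.mul_sum]
  exact Finset.sum_congr rfl fun j _ => by ring

/-- (Minimality of the negative part of a Zariski
decomposition.) Model ℝ-divisors on a smooth projective surface `X` as
finitely supported real combinations of irreducible curves (indexed by `ι`),
with intersection pairing `inter` such that nef divisor classes meet effective
divisors nonnegatively and distinct irreducible curves meet nonnegatively.
Let `D = P + N` be the Zariski decomposition of a pseudoeffective ℝ-divisor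
`D`: `P` is nef, `N ≥ 0` is effective, `P·C = 0` for every component `C` of
`N`, and the intersection form is negative definite on divisors supported on
the components of `N`. If `D = P' + N'` is any decomposition with `P'` nef
and `N'` effective, then `N ≤ N'` coefficientwise. -/
theorem zariski_negative_part_minimal {ι : Type*}
    (inter : (ι →₀ ℝ) →ₗ[ℝ] (ι →₀ ℝ) →ₗ[ℝ] ℝ)
    (inter_symm : ∀ a b, inter a b = inter b a)
    (Nef : (ι →₀ ℝ) → Prop)
    (hNefEff : ∀ P F : ι →₀ ℝ, Nef P → 0 ≤ F → 0 ≤ inter P F)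
    (hdistinct : ∀ i j : ι, i ≠ j →
      0 ≤ inter (Finsupp.single i 1) (Finsupp.single j 1))
    (D P N P' N' : ι →₀ ℝ)
    (hD : D = P + N) (hP : Nef P) (hN : 0 ≤ N)
    (horth : ∀ i ∈ N.support, inter P (Finsupp.single i 1) = 0)
    (hnegdef : ∀ x : ι →₀ ℝ, x ≠ 0 → (x.support : Set ι) ⊆ (N.support : Set ι) →
      inter x x < 0)
    (hD' : D = P' + N') (hP' : Nef P') (hN' : 0 ≤ N') :
    N ≤ N' := by
  classical
  set M : ι →₀ ℝ := N - N' with hM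
  -- positive and negative parts of M
  set A : ι →₀ ℝ := M.mapRange (fun r => max r 0) (by simp) with hA
  set B : ι →₀ ℝ := M.mapRange (fun r => max (-r) 0) (by simp) with hB
  have hAapp : ∀ i, A i = max (M i) 0 := fun i => by simp [hA]
  have hBapp : ∀ i, B i = max (-(M i)) 0 := fun i => by simp [hB]
  have hMapp : ∀ i, M i = N i - N' i := fun i => by simp [hM]
  have hABM : A - B = M := by
    ext i
    simp only [Finsupp.sub_apply, hAapp, hBapp]
    rcases le_total (M i) 0 with h | h
    · rw [max_eq_right h, max_eq_left (by linarith)]; ring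
    · rw [max_eq_left h, max_eq_right (by linarith)]; ring
  have hA0 : (0 : ι →₀ ℝ) ≤ A := by
    rw [Finsupp.le_def]; intro i
    simp only [Finsupp.coe_zero, Pi.zero_apply, hAapp]
    exact le_max_right _ _
  have hB0 : (0 : ι →₀ ℝ) ≤ B := by
    rw [Finsupp.le_def]; intro i
    simp only [Finsupp.coe_zero, Pi.zero_apply, hBapp]
    exact le_max_right _ _
  -- supports
  have hAsupp : ∀ i, A i ≠ 0 → 0 < M i := by
    intro i hi
    rw [hAapp] at hi
    by_contra h
    push_neg at h
    exact hi (max_eq_right h)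
  have hBsupp : ∀ i, B i ≠ 0 → M i < 0 := by
    intro i hi
    rw [hBapp] at hi
    by_contra h
    push_neg at h
    exact hi (max_eq_right (by linarith))
  have hAsubN : (A.support : Set ι) ⊆ (N.support : Set ι) := by
    intro i hi
    simp only [Finset.coe_sort_coe, Finset.mem_coe, Finsupp.mem_support_iff] at hi ⊢
    have h1 := hAsupp i hi
    have h2 : 0 ≤ N' i := (Finsupp.le_def.mp hN') i
    rw [hMapp] at h1
    intro h; rw [h] at h1; linarith
  -- P · A = 0
  have hPA : inter P A = 0 := by
    rw [← expand_single A, map_sum]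
    refine Finset.sum_eq_zero fun i hi => ?_
    rw [map_smul, smul_eq_mul, horth i (by exact_mod_cast hAsubN hi), mul_zero]
  -- A · B ≥ 0 (disjoint supports, effective)
  have hAB : 0 ≤ inter A B := by
    rw [inter_expand]
    refine Finset.sum_nonneg fun i hi => Finset.sum_nonneg fun j hj => ?_
    have hij : i ≠ j := by
      rintro rfl
      have h1 := hAsupp i (Finsupp.mem_support_iff.mp hi)
      have h2 := hBsupp i (Finsupp.mem_support_iff.mp hj)
      linarith
    have h1 : 0 ≤ A i := (Finsupp.le_def.mp hA0) i
    have h2 : 0 ≤ B j := (Finsupp.le_def.mp hB0) j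
    exact mul_nonneg (mul_nonneg h1 h2) (hdistinct i j hij)
  -- M = P' - P
  have hMPP : M = P' - P := by
    have h1 : P + N = P' + N' := by rw [← hD, ← hD']
    rw [hM, sub_eq_sub_iff_add_eq_add, add_comm]
    exact h1
  -- A·A ≥ 0
  have hAA : 0 ≤ inter A A := by
    have hAeq : A = (P' - P) + B := by rw [← hMPP, ← hABM]; abel
    have h1 : inter A A = inter A (P' - P) + inter A B := by
      nth_rewrite 2 [hAeq]
      rw [map_add]
    have h2 : inter A (P' - P) = inter P' A - inter P A := by
      rw [inter_symm, map_sub, LinearMap.sub_apply]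
    have h3 : 0 ≤ inter P' A := hNefEff P' A hP' hA0
    rw [h1, h2, hPA]
    linarith [hAB]
  -- so A = 0
  have hAzero : A = 0 := by
    by_contra h
    exact absurd hAA (not_le.mpr (hnegdef A h hAsubN))
  -- conclude
  rw [Finsupp.le_def]
  intro i
  have h1 : A i = 0 := by rw [hAzero]; rfl
  rw [hAapp] at h1
  have h2 : M i ≤ 0 := by
    by_contra h
    push_neg at h
    rw [max_eq_left (le_of_lt h)] at h1
    exact absurd h1 (ne_of_gt h)
  rw [hMapp] at h2
  linarith
end
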